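/- Let q be a prime power and let F(x) ∈ F_q[x]^{r×s}, G(x) ∈ F_q[x]^{s×l}, H(x) ∈ F_q[x]^{r×l} be matrices of polynomials over F_q with H(x) ≠ F(x)·G(x). Let D be a natural number such that every entry of H(x) and every entry of F(x)·G(x) has degree at most D, and assume D + 2 ≤ q. Let B ⊂ F_q be a set with |B| ≤ D + 1. If α is drawn uniformly at random from F_q \ B and, independently, ν is drawn uniformly at random from F_q^l, then the probability that H(α)·ν = F(α)·G(α)·ν is at most D/(q − D − 1) + 1/q − (D/(q − D − 1))·(1/q). -/

import Mathlib

/-!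
Put `Δ = H - F G`. The check passes exactly when `Δ(α) ν = 0`. Some entry `δ` of `Δ` is a
nonzero polynomial of degree at most `D`, so at most `D` of the at least `q - D - 1` admissible
points `α` are roots of `δ`. At any other `α` the matrix `Δ(α)` is nonzero, so its kernel is a
proper subspace of `F_q^l` and catches a uniform `ν` with probability at most `1/q`.
-/

/-- Entrywise evaluation of a matrix of polynomials at a point. -/
def Matrix.evalPoly {m n F : Type*} [Semiring F]
    (P : Matrix m n (Polynomial F)) (γ : F) : Matrix m n F :=
  Matrix.of fun i j => (P i j).eval γ

open scoped Matrix
open Finset Polynomial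

theorem Finset.card_filter_product_eq_sum {α β : Type*} (s : Finset α) (t : Finset β)
    (P : α × β → Prop) [DecidablePred P] :
    #((s ×ˢ t).filter P) = ∑ a ∈ s, #(t.filter fun b => P (a, b)) := by
  simp only [card_filter, sum_product]

theorem Polynomial.card_filter_eval_eq_zero_le {R : Type*} [CommRing R] [IsDomain R]
    [DecidableEq R] {p : R[X]} (hp : p ≠ 0) (s : Finset R) :
    #(s.filter fun a => p.eval a = 0) ≤ p.natDegree :=
  card_le_degree_of_subset_roots fun _ ha => (mem_roots hp).2 (mem_filter.1 ha).2

theorem Submodule.natCard_mul_natCard_le_of_ne_top {K V : Type*} [Field K] [Finite K]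
    [AddCommGroup V] [Module K V] [Module.Finite K V] {p : Submodule K V} (hp : p ≠ ⊤) :
    Nat.card p * Nat.card K ≤ Nat.card V := by
  rw [Module.natCard_eq_pow_finrank (K := K), Module.natCard_eq_pow_finrank (K := K) (V := V),
    ← pow_succ]
  exact Nat.pow_le_pow_right Nat.card_pos (finrank_lt hp)

namespace Matrix

variable {m n o K : Type*}

theorem evalPoly_sub [Ring K] (P Q : Matrix m n K[X]) (γ : K) :
    (P - Q).evalPoly γ = P.evalPoly γ - Q.evalPoly γ := by
  ext i j
  simp [evalPoly]

theorem evalPoly_mul [Fintype n] [CommSemiring K] (P : Matrix m n K[X]) (Q : Matrix n o K[X])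
    (γ : K) : (P * Q).evalPoly γ = P.evalPoly γ * Q.evalPoly γ := by
  ext i j
  simp [evalPoly, mul_apply, eval_finsetSum]

variable [Fintype m] [Fintype n] [DecidableEq n] [Field K] [Fintype K] [DecidableEq K]

theorem card_filter_mulVec_eq_zero_mul_card_le {M : Matrix m n K} (hM : M ≠ 0) :
    #{ν | M *ᵥ ν = 0} * Fintype.card K ≤ Fintype.card K ^ Fintype.card n := by
  have hker : LinearMap.ker M.mulVecLin ≠ ⊤ := fun h => by
    rw [LinearMap.ker_eq_top, ← toLin'_apply'] at h
    exact hM (toLin'.map_eq_zero_iff.1 h)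
  simpa [Fintype.card_subtype] using Submodule.natCard_mul_natCard_le_of_ne_top hker

theorem card_filter_evalPoly_mulVec_eq_zero_le (Δ : Matrix m n K[X]) (i : m) (j : n)
    (S : Finset K) :
    (#((S ×ˢ univ).filter fun x : K × (n → K) => Δ.evalPoly x.1 *ᵥ x.2 = 0) : ℝ) ≤
      #(S.filter fun α => (Δ i j).eval α = 0) * (Fintype.card K : ℝ) ^ Fintype.card n +
        #(S.filter fun α => (Δ i j).eval α ≠ 0) *
          ((Fintype.card K : ℝ) ^ Fintype.card n / Fintype.card K) := by
  have hq : (0 : ℝ) < Fintype.card K := Nat.cast_pos.2 Fintype.card_pos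
  calc (#((S ×ˢ univ).filter fun x : K × (n → K) => Δ.evalPoly x.1 *ᵥ x.2 = 0) : ℝ)
      = ∑ α ∈ S, (#{ν | Δ.evalPoly α *ᵥ ν = 0} : ℝ) := by
        rw [card_filter_product_eq_sum, Nat.cast_sum]
    _ ≤ ∑ α ∈ S, if (Δ i j).eval α = 0 then (Fintype.card K : ℝ) ^ Fintype.card n
          else (Fintype.card K : ℝ) ^ Fintype.card n / Fintype.card K := by
        refine sum_le_sum fun α _ => ?_
        split_ifs with hα
        · exact_mod_cast (card_filter_le _ _).trans_eq (by simp [card_univ])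
        · have hM : Δ.evalPoly α ≠ 0 := fun h => hα (congrFun₂ h i j)
          rw [le_div_iff₀ hq]
          exact_mod_cast card_filter_mulVec_eq_zero_mul_card_le hM
    _ = _ := by rw [sum_ite, sum_const, sum_const, nsmul_eq_mul, nsmul_eq_mul]

end Matrix

-- `b` points contribute at most `N` vectors each and `g` points at most `N / q` each.
theorem mixture_div_le {q D b g N : ℝ} (hDq : D + 2 ≤ q) (hbg : q - D - 1 ≤ b + g)
    (hb : 0 ≤ b) (hbD : b ≤ D) (hN : 0 < N) :
    (b * N + g * (N / q)) / ((b + g) * N) ≤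
      D / (q - D - 1) + 1 / q - D / (q - D - 1) * (1 / q) := by
  have hε : b / (b + g) ≤ D / (q - D - 1) := div_le_div₀ (by linarith) hbD (by linarith) hbg
  have hmix : (b * N + g * (N / q)) / ((b + g) * N) =
      b / (b + g) + 1 / q - b / (b + g) * (1 / q) := by
    have : b + g ≠ 0 := by linarith
    field_simp
    ring
  have hq : 1 / q ≤ 1 := by rw [div_le_one] <;> linarith
  rw [hmix]
  nlinarith [mul_le_mul_of_nonneg_right hε (sub_nonneg.2 hq)]

/-- Missed-detection bound for SRPM3's per-cluster security check:
with `H(x) ≠ F(x) * G(x)`, all entries of `H(x)` and `F(x) * G(x)` of degree at most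
`D`, `D + 2 ≤ q`, and `|B| ≤ D + 1`, a uniformly random `α ∈ F_q \ B` together with an
independent uniformly random `ν ∈ F_q^l` satisfies `H(α) ν = F(α) G(α) ν` with
probability at most `D/(q-D-1) + 1/q - (D/(q-D-1)) * (1/q)`. -/
theorem srpm3_cluster_check_missed_detection_bound
    (q r s l D : ℕ) (F : Type*) [Field F] [Fintype F] [DecidableEq F]
    (hq : Fintype.card F = q)
    (Fp : Matrix (Fin r) (Fin s) (Polynomial F))
    (Gp : Matrix (Fin s) (Fin l) (Polynomial F))
    (Hp : Matrix (Fin r) (Fin l) (Polynomial F))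
    (hne : Hp ≠ Fp * Gp)
    (hdegH : ∀ i j, (Hp i j).natDegree ≤ D)
    (hdegFG : ∀ i j, ((Fp * Gp) i j).natDegree ≤ D)
    (hD : D + 2 ≤ q)
    (B : Finset F) (hB : B.card ≤ D + 1) :
    ((((Finset.univ \ B) ×ˢ (Finset.univ : Finset (Fin l → F))).filter
        (fun p => (Hp.evalPoly p.1).mulVec p.2 =
          ((Fp.evalPoly p.1) * (Gp.evalPoly p.1)).mulVec p.2)).card : ℝ)
      / ((((Finset.univ \ B) ×ˢ (Finset.univ : Finset (Fin l → F))).card : ℝ))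
      ≤ (D : ℝ) / ((q : ℝ) - D - 1) + 1 / (q : ℝ)
          - ((D : ℝ) / ((q : ℝ) - D - 1)) * (1 / (q : ℝ)) := by
  set Δ := Hp - Fp * Gp
  obtain ⟨i, j, hij⟩ : ∃ i j, Δ i j ≠ 0 := by
    by_contra! h
    exact hne (sub_eq_zero.1 (Matrix.ext h))
  have hevent (x : F × (Fin l → F)) : Hp.evalPoly x.1 *ᵥ x.2 =
      (Fp.evalPoly x.1 * Gp.evalPoly x.1) *ᵥ x.2 ↔ Δ.evalPoly x.1 *ᵥ x.2 = 0 := by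
    rw [Matrix.evalPoly_sub, Matrix.evalPoly_mul, Matrix.sub_mulVec, sub_eq_zero]
  set S := univ \ B
  have hroots : #(S.filter fun α => (Δ i j).eval α = 0) ≤ D :=
    (card_filter_eval_eq_zero_le hij S).trans
      ((natDegree_sub_le _ _).trans (max_le (hdegH i j) (hdegFG i j)))
  have hsplit := card_filter_add_card_filter_not (s := S) fun α => (Δ i j).eval α = 0
  have hS : (q : ℝ) - D - 1 ≤ #(S.filter fun α => (Δ i j).eval α = 0) +
      #(S.filter fun α => ¬(Δ i j).eval α = 0) := by
    have hSB : (#S : ℝ) + #B = q := by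
      rw [← hq, ← card_univ, ← card_sdiff_add_card_eq_card (subset_univ B), Nat.cast_add]
    have hB' : (#B : ℝ) ≤ D + 1 := by exact_mod_cast hB
    rw [← Nat.cast_add, hsplit]
    linarith
  rw [filter_congr fun x _ => hevent x, card_product, card_univ, Fintype.card_fun,
    Fintype.card_fin]
  refine (div_le_div_of_nonneg_right (Δ.card_filter_evalPoly_mulVec_eq_zero_le i j S)
    (by positivity)).trans ?_
  rw [← hsplit, hq, Fintype.card_fin]
  push_cast
  exact mixture_div_le (by exact_mod_cast hD) hS (Nat.cast_nonneg _) (by exact_mod_cast hroots)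
    (pow_pos (by exact_mod_cast (by omega : 0 < q)) l)
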